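/- Let n ≥ 2, a > 0, and α = (α_1,…,α_n) ∈ (0,∞)^n with a α_k < 1 for all k; set β_k := (1 − a α_k)/α_k. Let μ ∈ ℝ^n and let Σ ∈ ℝ^{n×n} be a symmetric positive semidefinite matrix, and let Ψ(θ) = −a Log(1 − i⟨α⋄μ, θ⟩ + ½‖θ‖²_{α⋄Σ}) − Σ_{k=1}^n β_k Log(1 − i α_k μ_k θ_k + ½ α_k θ_k² Σ_{kk}). Then for every k ∈ {1,…,n} and every s ∈ ℝ, Ψ(s e_k) = −(1/α_k) Log(1 − i α_k μ_k s + ½ α_k s² Σ_{kk}), where e_k is the k-th standard basis vector of ℝ^n. -/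
import Mathlib


open MeasureTheory Complex

noncomputable section

/-- Euclidean inner product on `ℝ^n`. -/
def dot {n : ℕ} (x y : Fin n → ℝ) : ℝ := ∑ k, x k * y k

/-- Quadratic form `‖θ‖²_A = θ A θᵀ`. -/
def quad {n : ℕ} (A : Matrix (Fin n) (Fin n) ℝ) (θ : Fin n → ℝ) : ℝ :=
  ∑ k, ∑ l, θ k * A k l * θ l

/-- Outer product `t ⋄ μ` of vectors, `(t ⋄ μ)_k = t_k μ_k`. -/
def diaV {n : ℕ} (t μ : Fin n → ℝ) : Fin n → ℝ := fun k => t k * μ k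

/-- Outer product `t ⋄ Σ`, `(t ⋄ Σ)_{kl} = Σ_{kl} min(t_k, t_l)`. -/
def diaM {n : ℕ} (t : Fin n → ℝ) (A : Matrix (Fin n) (Fin n) ℝ) :
    Matrix (Fin n) (Fin n) ℝ := Matrix.of fun k l => A k l * min (t k) (t l)

/-- Lévy exponent of the weak variance-alpha-gamma process `WVAG^n(a, α, μ, Σ)`:
`Ψ(θ) = -a Log(1 - i⟨α⋄μ,θ⟩ + ½‖θ‖²_{α⋄Σ}) - ∑ₖ βₖ Log(1 - i αₖ μₖ θₖ + ½ αₖ θₖ² Σₖₖ)`,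
where `βₖ = (1 - a αₖ)/αₖ`. -/
def Ψwvag {n : ℕ} (a : ℝ) (α μ : Fin n → ℝ) (S : Matrix (Fin n) (Fin n) ℝ)
    (θ : Fin n → ℝ) : ℂ :=
  -(a : ℂ) * Complex.log (1 - Complex.I * (dot (diaV α μ) θ : ℂ) +
      (quad (diaM α S) θ : ℂ) / 2) -
    ∑ k, (((1 - a * α k) / α k : ℝ) : ℂ) *
      Complex.log (1 - Complex.I * ((α k * μ k * θ k : ℝ) : ℂ) +
        ((α k * θ k ^ 2 * S k k : ℝ) : ℂ) / 2)

/-- The marginals of the `WVAG^n(a,α,μ,Σ)` process: evaluating its Lévy exponent at `s eₖ`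
gives the Lévy exponent of the one-dimensional variance-gamma process
`VG^1(1/αₖ, μₖ, Σₖₖ)`. -/
theorem stmt8 {n : ℕ} (hn : 2 ≤ n) (a : ℝ) (ha : 0 < a) (α : Fin n → ℝ)
    (hα : ∀ k, 0 < α k) (hsmall : ∀ k, a * α k < 1) (μ : Fin n → ℝ)
    (S : Matrix (Fin n) (Fin n) ℝ) (hS : S.PosSemidef) (k : Fin n) (s : ℝ) :
    Ψwvag a α μ S (Pi.single k s) =
      -((1 / α k : ℝ) : ℂ) * Complex.log (1 - Complex.I * ((α k * μ k * s : ℝ) : ℂ) +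
        ((α k * s ^ 2 * S k k : ℝ) : ℂ) / 2) := by
  have hak : (α k : ℝ) ≠ 0 := ne_of_gt (hα k)
  have hdot : dot (diaV α μ) (Pi.single k s) = α k * μ k * s := by
    simp only [dot, diaV, Pi.single_apply, mul_ite, mul_zero]
    rw [Finset.sum_ite_eq' (Finset.univ) k fun j => α j * μ j * s]
    simp
  have hquad : quad (diaM α S) (Pi.single k s) = α k * s ^ 2 * S k k := by
    simp only [quad, diaM, Matrix.of_apply, Pi.single_apply]
    rw [Finset.sum_eq_single k]
    · rw [Finset.sum_eq_single k]
      · simp; ring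
      · intro l _ hl; simp only [if_neg hl]; ring
      · simp
    · intro j _ hj
      rw [Finset.sum_eq_single k] <;> simp [hj]
    · simp
  have hsum : ∀ j : Fin n, j ≠ k →
      (((1 - a * α j) / α j : ℝ) : ℂ) *
        Complex.log (1 - Complex.I * ((α j * μ j * ((Pi.single k s : Fin n → ℝ) j) : ℝ) : ℂ) +
          ((α j * ((Pi.single k s : Fin n → ℝ) j) ^ 2 * S j j : ℝ) : ℂ) / 2) = 0 := by
    intro j hj
    simp [Pi.single_apply, hj]
  unfold Ψwvag
  rw [hdot, hquad, Finset.sum_eq_single k _ (by simp)]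
  · simp only [Pi.single_eq_same]
    rw [show -(a:ℂ) * Complex.log (1 - Complex.I * ((α k * μ k * s : ℝ):ℂ) + ((α k * s ^ 2 * S k k:ℝ):ℂ)/2) -
        (((1 - a * α k)/α k : ℝ):ℂ) * Complex.log (1 - Complex.I * ((α k * μ k * s : ℝ):ℂ) + ((α k * s ^ 2 * S k k:ℝ):ℂ)/2)
        = (-(a:ℂ) - (((1 - a * α k)/α k : ℝ):ℂ)) * Complex.log (1 - Complex.I * ((α k * μ k * s : ℝ):ℂ) + ((α k * s ^ 2 * S k k:ℝ):ℂ)/2) by ring]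
    congr 1
    push_cast
    have : ((α k : ℝ) : ℂ) ≠ 0 := by exact_mod_cast hak
    field_simp
    ring
  · intro j _ hj; exact hsum j hj
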